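/- Let (X, 𝓑) be a standard Borel space, μ a Borel probability measure on X, and S a Markov operator on L²(X, μ). Then there exist μ-relatively complete sub-σ-algebras C and D of 𝓑 such that: (1) L²(X, C, μ) = {f ∈ L²(X, μ) : (S ∘ S*) f = f}; (2) L²(X, D, μ) = {f ∈ L²(X, μ) : (S* ∘ S) f = f}; (3) E_C ∘ S = S ∘ E_D; and (4) S maps L²(X, D, μ) isometrically onto L²(X, C, μ), and the restriction of S* to L²(X, C, μ) is the inverse of this restriction of S. -/

import Mathlib

open MeasureTheory

noncomputable section

/-- `m'` is a `μ`-relatively complete sub-σ-algebra of the ambient σ-algebra `mα`. -/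
def RelComplete {X : Type*} [mα : MeasurableSpace X]
    (μ : Measure X) (m' : MeasurableSpace X) : Prop :=
  ∀ Z Z₀ : Set X, MeasurableSet[mα] Z → MeasurableSet[m'] Z₀ →
    μ (symmDiff Z Z₀) = 0 → MeasurableSet[m'] Z

/-- The constant-one function as an element of `L²` of a finite measure. -/
noncomputable def lpOne {Z : Type*} [MeasurableSpace Z] (ν : Measure Z)
    [IsFiniteMeasure ν] : Lp ℝ 2 ν :=
  Lp.const 2 ν (1 : ℝ)

/-- A Markov operator on `L²`: positivity-preserving, fixing the constants, with adjoint
fixing the constants. -/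
def IsMarkovOp {Z : Type*} [MeasurableSpace Z] (ν : Measure Z) [IsFiniteMeasure ν]
    (S : Lp ℝ 2 ν →L[ℝ] Lp ℝ 2 ν) : Prop :=
  (∀ f : Lp ℝ 2 ν, (0 : Z → ℝ) ≤ᵐ[ν] ⇑f → (0 : Z → ℝ) ≤ᵐ[ν] ⇑(S f)) ∧
    S (lpOne ν) = lpOne ν ∧
    ContinuousLinearMap.adjoint S (lpOne ν) = lpOne ν

/-- The conditional expectation `E_m` as an operator on `L²`, i.e. the orthogonal projection
onto the closed subspace `lpMeas` of (a.e.) `m`-measurable `L²` functions. -/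
noncomputable def condExpCLM {X : Type*} {m : MeasurableSpace X} [mα : MeasurableSpace X]
    (μ : Measure X) (hm : m ≤ mα) : Lp ℝ 2 μ →L[ℝ] Lp ℝ 2 μ :=
  (lpMeas ℝ ℝ m 2 μ).subtypeL.comp (condExpL2 ℝ ℝ hm)

/-- The conclusion of Statement 6, for sub-σ-algebras `mC`, `mD`. -/
def Stmt6Conclusion {X : Type*} {mC mD : MeasurableSpace X} [mα : MeasurableSpace X]
    (μ : Measure X) [IsProbabilityMeasure μ]
    (S : Lp ℝ 2 μ →L[ℝ] Lp ℝ 2 μ) (hmC : mC ≤ mα) (hmD : mD ≤ mα) : Prop :=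
  RelComplete μ mC ∧ RelComplete μ mD ∧
  (∀ f : Lp ℝ 2 μ, f ∈ lpMeas ℝ ℝ mC 2 μ ↔
    S (ContinuousLinearMap.adjoint S f) = f) ∧
  (∀ f : Lp ℝ 2 μ, f ∈ lpMeas ℝ ℝ mD 2 μ ↔
    ContinuousLinearMap.adjoint S (S f) = f) ∧
  (∀ f : Lp ℝ 2 μ, condExpCLM μ hmC (S f) = S (condExpCLM μ hmD f)) ∧
  (∀ f ∈ lpMeas ℝ ℝ mD 2 μ, S f ∈ lpMeas ℝ ℝ mC 2 μ ∧ ‖S f‖ = ‖f‖) ∧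
  (∀ g ∈ lpMeas ℝ ℝ mC 2 μ, ContinuousLinearMap.adjoint S g ∈ lpMeas ℝ ℝ mD 2 μ) ∧
  (∀ f ∈ lpMeas ℝ ℝ mD 2 μ, ContinuousLinearMap.adjoint S (S f) = f) ∧
  (∀ g ∈ lpMeas ℝ ℝ mC 2 μ, S (ContinuousLinearMap.adjoint S g) = g)

/-!
For a Markov operator `T`, positivity gives `|T f| ≤ T |f|` and `T* 1 = 1` makes `T` preserve
integrals, so the fixed points of `T` form a closed vector sublattice of `L²` containing the
constants. Such a sublattice is exactly `L²` of the σ-algebra of sets whose indicators it contains.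
Applied to the Markov operators `S S*` and `S* S` this gives `C` and `D`. The rest is Hilbert-space
algebra: `S` and `S*` exchange the two fixed spaces, so `S` intertwines the orthogonal projections
onto them, and `‖S f‖² = ⟪S* S f, f⟫ = ‖f‖²` on `L²(D)`.
-/
open Filter Topology Function ContinuousLinearMap
open scoped ENNReal RealInnerProductSpace symmDiff

theorem tendsto_max_min_natCast_mul (a : ℝ) :
    Tendsto (fun n : ℕ ↦ max (min (n * a) 1) 0) atTop (𝓝 ((Set.Ioi 0).indicator 1 a)) := by
  by_cases ha : 0 < a
  · have hge : ∀ᶠ n : ℕ in atTop, 1 ≤ n * a :=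
      (tendsto_natCast_atTop_atTop.atTop_mul_const ha).eventually_ge_atTop 1
    refine tendsto_const_nhds.congr' (hge.mono fun n hn ↦ ?_)
    simp [min_eq_right hn, ha]
  · have hle (n : ℕ) : (n : ℝ) * a ≤ 0 :=
      mul_nonpos_of_nonneg_of_nonpos n.cast_nonneg (not_lt.mp ha)
    simp [ha, hle]

namespace MeasureTheory

variable {X : Type*} [MeasurableSpace X] {μ : Measure X}

theorem Lp.tendsto_of_tendsto_ae_of_norm_le {E : Type*} [NormedAddCommGroup E] {p : ℝ≥0∞}
    [Fact (1 ≤ p)] [IsFiniteMeasure μ] (hp : p ≠ ∞) {F : ℕ → Lp E p μ} {G : Lp E p μ} {C : ℝ}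
    (hF : ∀ n, ∀ᵐ x ∂μ, ‖F n x‖ ≤ C)
    (hFG : ∀ᵐ x ∂μ, Tendsto (fun n ↦ F n x) atTop (𝓝 (G x))) :
    Tendsto F atTop (𝓝 G) := by
  rw [Lp.tendsto_Lp_iff_tendsto_eLpNorm']
  refine tendsto_Lp_finite_of_tendsto_ae Fact.out hp (fun n ↦ Lp.aestronglyMeasurable _)
    (Lp.memLp G) ?_ hFG
  intro ε hε
  obtain ⟨δ, hδ, hC⟩ :=
    (memLp_const (μ := μ) (p := p) C).eLpNorm_indicator_le Fact.out hp hε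
  refine ⟨δ, hδ, fun n s hs hμs ↦ (eLpNorm_mono_ae ?_).trans (hC s hs hμs)⟩
  filter_upwards [hF n] with x hx
  by_cases hxs : x ∈ s
  · simpa [hxs] using hx.trans (le_abs_self C)
  · simp [hxs]

theorem Lp.eq_zero_of_nonneg_of_integral_eq_zero {p : ℝ≥0∞} [Fact (1 ≤ p)] [IsFiniteMeasure μ]
    {f : Lp ℝ p μ} (hf : 0 ≤ f) (hint : ∫ x, f x ∂μ = 0) : f = 0 := by
  have hf_int : Integrable f μ := (Lp.memLp f).integrable Fact.out
  refine Lp.ext ((integral_eq_zero_iff_of_nonneg_ae ?_ hf_int).mp hint |>.trans ?_)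
  · exact (Lp.coeFn_nonneg f).mpr hf
  · exact (Lp.coeFn_zero ℝ p μ).symm

theorem indicatorConstLp_eq_smul_one {p : ℝ≥0∞} {s : Set X} (hs : MeasurableSet s)
    (hμs : μ s ≠ ∞) (c : ℝ) :
    indicatorConstLp p hs hμs c = c • indicatorConstLp p hs hμs 1 := by
  refine Lp.ext ?_
  filter_upwards [indicatorConstLp_coeFn (p := p) (hs := hs) (hμs := hμs) (c := c),
    indicatorConstLp_coeFn (p := p) (hs := hs) (hμs := hμs) (c := (1 : ℝ)),
    Lp.coeFn_smul c (indicatorConstLp p hs hμs (1 : ℝ))] with x h h₁ hc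
  by_cases hx : x ∈ s <;> simp [h, h₁, hc, hx]

theorem indicatorConstLp_compl [IsFiniteMeasure μ] {p : ℝ≥0∞} {s : Set X} (hs : MeasurableSet s)
    (c : ℝ) :
    indicatorConstLp p hs.compl (measure_ne_top μ _) c
      = Lp.const p μ c - indicatorConstLp p hs (measure_ne_top μ _) c := by
  refine Lp.ext ?_
  filter_upwards [indicatorConstLp_coeFn (p := p) (hs := hs.compl) (hμs := measure_ne_top μ _)
      (c := c), indicatorConstLp_coeFn (p := p) (hs := hs) (hμs := measure_ne_top μ _) (c := c),
    Lp.coeFn_const p μ c, Lp.coeFn_sub (Lp.const p μ c) (indicatorConstLp p hs _ c)]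
    with x hsc hs' hc hsub
  rw [hsc, hsub, Pi.sub_apply, hc, hs']
  by_cases hx : x ∈ s <;> simp [hx]

theorem indicatorConstLp_union_eq_sup {p : ℝ≥0∞} {s t : Set X} (hs : MeasurableSet s)
    (ht : MeasurableSet t) (hμs : μ s ≠ ∞) (hμt : μ t ≠ ∞) {c : ℝ} (hc : 0 ≤ c) :
    indicatorConstLp p (hs.union ht) (by finiteness) c
      = indicatorConstLp p hs hμs c ⊔ indicatorConstLp p ht hμt c := by
  refine Lp.ext ?_
  filter_upwards [indicatorConstLp_coeFn (p := p) (hs := hs.union ht)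
      (hμs := (measure_union_lt_top hμs.lt_top hμt.lt_top).ne) (c := c),
    indicatorConstLp_coeFn (p := p) (hs := hs) (hμs := hμs) (c := c),
    indicatorConstLp_coeFn (p := p) (hs := ht) (hμs := hμt) (c := c),
    Lp.coeFn_sup (indicatorConstLp p hs hμs c) (indicatorConstLp p ht hμt c)]
    with x hst hs' ht' hsup
  by_cases hxs : x ∈ s <;> by_cases hxt : x ∈ t <;> simp [hst, hs', ht', hsup, hxs, hxt, hc]

theorem tendsto_measure_symmDiff_accumulate [IsFiniteMeasure μ] {s : ℕ → Set X}
    (hs : ∀ n, MeasurableSet (s n)) :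
    Tendsto (fun n ↦ μ (Set.accumulate s n ∆ ⋃ i, s i)) atTop (𝓝 0) := by
  have hmono := tendsto_measure_iUnion_atTop (μ := μ) (Set.monotone_accumulate (s := s))
  rw [Set.iUnion_accumulate] at hmono
  have hdiff : ∀ n, μ (Set.accumulate s n ∆ ⋃ i, s i) = μ (⋃ i, s i) - μ (Set.accumulate s n) :=
    fun n ↦ by
      rw [symmDiff_of_le (Set.accumulate_subset_iUnion n), measure_sdiff
        (Set.accumulate_subset_iUnion n) (MeasurableSet.biUnion (Set.to_countable _)
          fun i _ ↦ hs i).nullMeasurableSet (measure_ne_top μ _)]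
  simpa [hdiff] using ENNReal.Tendsto.sub (tendsto_const_nhds (x := μ (⋃ i, s i))) hmono
    (.inl (measure_ne_top μ _))

theorem _root_.coeFn_lpOne [IsFiniteMeasure μ] : ⇑(lpOne μ) =ᵐ[μ] 1 :=
  Lp.coeFn_const 2 μ 1

namespace L2

theorem inner_nonneg_of_nonneg {f g : Lp ℝ 2 μ} (hf : 0 ≤ f) (hg : 0 ≤ g) : 0 ≤ ⟪f, g⟫ := by
  rw [L2.inner_def]
  refine integral_nonneg_of_ae ?_
  filter_upwards [(Lp.coeFn_nonneg f).mpr hf, (Lp.coeFn_nonneg g).mpr hg] with x hfx hgx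
  simpa using mul_nonneg hgx hfx

theorem nonneg_of_forall_inner_nonneg [IsFiniteMeasure μ] {f : Lp ℝ 2 μ}
    (h : ∀ g : Lp ℝ 2 μ, 0 ≤ g → 0 ≤ ⟪g, f⟫) : 0 ≤ f := by
  rw [← Lp.coeFn_nonneg]
  refine ae_nonneg_of_forall_setIntegral_nonneg ((Lp.memLp f).integrable one_le_two)
    fun s hs hμs ↦ ?_
  rw [← L2.inner_indicatorConstLp_one hs hμs.ne]
  refine h _ ?_
  rw [← Lp.coeFn_nonneg]
  filter_upwards [indicatorConstLp_coeFn (p := 2) (hs := hs) (hμs := hμs.ne) (c := (1 : ℝ))]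
    with x hx
  by_cases hxs : x ∈ s <;> simp [hx, hxs]

theorem inner_lpOne [IsFiniteMeasure μ] (f : Lp ℝ 2 μ) : ⟪lpOne μ, f⟫ = ∫ x, f x ∂μ := by
  rw [lpOne, ← indicatorConstLp_univ, L2.inner_indicatorConstLp_one, setIntegral_univ]

end L2

end MeasureTheory

section Hilbert

variable {𝕜 H : Type*} [RCLike 𝕜] [NormedAddCommGroup H] [InnerProductSpace 𝕜 H] [CompleteSpace H]

theorem ContinuousLinearMap.norm_map_eq_of_adjoint_map_eq {S : H →L[𝕜] H} {f : H}
    (hf : adjoint S (S f) = f) : ‖S f‖ = ‖f‖ := by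
  have hsq : ‖S f‖ ^ 2 = ‖f‖ ^ 2 := by
    rw [← inner_self_eq_norm_sq (𝕜 := 𝕜), ← inner_self_eq_norm_sq (𝕜 := 𝕜),
      ← adjoint_inner_left, hf]
  exact (pow_left_inj₀ (norm_nonneg _) (norm_nonneg _) two_ne_zero).mp hsq

theorem Submodule.starProjection_map_eq_of_mapsTo {U V : Submodule 𝕜 H}
    [U.HasOrthogonalProjection] [V.HasOrthogonalProjection] {S : H →L[𝕜] H}
    (hS : Set.MapsTo S V U) (hS' : Set.MapsTo (adjoint S) U V) (f : H) :
    U.starProjection (S f) = S (V.starProjection f) := by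
  refine U.eq_starProjection_of_mem_of_inner_eq_zero (hS (V.starProjection_apply_mem f))
    fun u hu ↦ ?_
  rw [← map_sub, ← adjoint_inner_right]
  exact V.starProjection_inner_eq_zero f _ (hS' hu)

end Hilbert

namespace IsMarkovOp

variable {X : Type*} [mα : MeasurableSpace X] {μ : Measure X} [IsFiniteMeasure μ]
  {S T : Lp ℝ 2 μ →L[ℝ] Lp ℝ 2 μ}

theorem map_nonneg (hT : IsMarkovOp μ T) {f : Lp ℝ 2 μ} (hf : 0 ≤ f) : 0 ≤ T f :=
  (Lp.coeFn_nonneg _).mp (hT.1 f ((Lp.coeFn_nonneg _).mpr hf))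

theorem map_lpOne (hT : IsMarkovOp μ T) : T (lpOne μ) = lpOne μ := hT.2.1

theorem adjoint_map_lpOne (hT : IsMarkovOp μ T) : adjoint T (lpOne μ) = lpOne μ := hT.2.2

theorem monotone (hT : IsMarkovOp μ T) : Monotone T := fun f g hfg ↦ by
  simpa using hT.map_nonneg (sub_nonneg.mpr hfg)

theorem integral_map (hT : IsMarkovOp μ T) (f : Lp ℝ 2 μ) :
    ∫ x, T f x ∂μ = ∫ x, f x ∂μ := by
  rw [← L2.inner_lpOne, ← L2.inner_lpOne, ← adjoint_inner_left, hT.adjoint_map_lpOne]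

protected theorem adjoint (hT : IsMarkovOp μ T) : IsMarkovOp μ (adjoint T) := by
  refine ⟨fun f hf ↦ ?_, hT.adjoint_map_lpOne, by rw [adjoint_adjoint]; exact hT.map_lpOne⟩
  rw [Lp.coeFn_nonneg]
  refine L2.nonneg_of_forall_inner_nonneg fun g hg ↦ ?_
  rw [adjoint_inner_right]
  exact L2.inner_nonneg_of_nonneg (hT.map_nonneg hg) ((Lp.coeFn_nonneg f).mp hf)

protected theorem comp (hS : IsMarkovOp μ S) (hT : IsMarkovOp μ T) : IsMarkovOp μ (S ∘L T) :=
  ⟨fun f hf ↦ hS.1 _ (hT.1 f hf), by simp [hT.map_lpOne, hS.map_lpOne],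
    by simp [adjoint_comp, hS.adjoint_map_lpOne, hT.adjoint_map_lpOne]⟩

theorem isFixedPt_abs (hT : IsMarkovOp μ T) {f : Lp ℝ 2 μ} (hf : IsFixedPt T f) :
    IsFixedPt T |f| := by
  have hle : |f| ≤ T |f| := abs_le'.mpr
    ⟨by simpa [hf.eq] using hT.monotone (le_abs_self f),
      by simpa [hf.eq] using hT.monotone (neg_le_abs f)⟩
  have hzero : T |f| - |f| = 0 := by
    refine Lp.eq_zero_of_nonneg_of_integral_eq_zero (sub_nonneg.mpr hle) ?_
    rw [integral_congr_ae (Lp.coeFn_sub _ _), Pi.sub_def,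
      integral_sub (Lp.memLp _ |>.integrable one_le_two) (Lp.memLp _ |>.integrable one_le_two),
      hT.integral_map, sub_self]
  exact sub_eq_zero.mp hzero

theorem isFixedPt_sup (hT : IsMarkovOp μ T) {f g : Lp ℝ 2 μ} (hf : IsFixedPt T f)
    (hg : IsFixedPt T g) : IsFixedPt T (f ⊔ g) := by
  have habs : IsFixedPt T |g - f| := hT.isFixedPt_abs (by simp [IsFixedPt, hf.eq, hg.eq])
  rw [IsFixedPt, sup_eq_half_smul_add_add_abs_sub' ℝ f g, map_smul, map_add, map_add, hf.eq,
    hg.eq, habs.eq]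

theorem isFixedPt_inf (hT : IsMarkovOp μ T) {f g : Lp ℝ 2 μ} (hf : IsFixedPt T f)
    (hg : IsFixedPt T g) : IsFixedPt T (f ⊓ g) := by
  have habs : IsFixedPt T |g - f| := hT.isFixedPt_abs (by simp [IsFixedPt, hf.eq, hg.eq])
  rw [IsFixedPt, inf_eq_half_smul_add_sub_abs_sub' ℝ f g, map_smul, map_sub, map_add, hf.eq,
    hg.eq, habs.eq]

theorem isFixedPt_indicatorConstLp_compl (hT : IsMarkovOp μ T) {s : Set X}
    (hs : MeasurableSet s) (hfix : IsFixedPt T (indicatorConstLp 2 hs (measure_ne_top μ s) 1)) :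
    IsFixedPt T (indicatorConstLp 2 hs.compl (measure_ne_top μ sᶜ) 1) := by
  have hone : T (Lp.const 2 μ 1) = Lp.const 2 μ 1 := hT.map_lpOne
  rw [IsFixedPt, indicatorConstLp_compl, map_sub, hone, hfix.eq]

theorem isFixedPt_indicatorConstLp_iUnion (hT : IsMarkovOp μ T) {s : ℕ → Set X}
    (hs : ∀ n, MeasurableSet (s n))
    (hfix : ∀ n, IsFixedPt T (indicatorConstLp 2 (hs n) (measure_ne_top μ (s n)) 1)) :
    IsFixedPt T (indicatorConstLp 2 (.iUnion hs) (measure_ne_top μ _) 1) := by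
  have hacc_meas (n : ℕ) : MeasurableSet (Set.accumulate s n) :=
    .biUnion (Set.to_countable _) fun i _ ↦ hs i
  have hacc : ∀ n (hn : MeasurableSet (Set.accumulate s n)),
      IsFixedPt T (indicatorConstLp 2 hn (measure_ne_top μ _) 1) := by
    intro n
    induction n with
    | zero => simpa only [Set.accumulate_zero_nat] using fun _ ↦ hfix 0
    | succ n ih =>
      rw [Set.accumulate_succ]
      intro hn
      rw [indicatorConstLp_union_eq_sup _ (hs (n + 1)) (measure_ne_top μ _) (measure_ne_top μ _)
        zero_le_one]
      · exact hT.isFixedPt_sup (ih _) (hfix (n + 1))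
      · exact hacc_meas n
  exact (isClosed_fixedPoints T.continuous).mem_of_tendsto
    (tendsto_indicatorConstLp_set (ht := hacc_meas) (hμt := fun _ ↦ measure_ne_top μ _)
      ENNReal.ofNat_ne_top (tendsto_measure_symmDiff_accumulate hs))
    (.of_forall fun n ↦ hacc n (hacc_meas n))

/-- The σ-algebra `C` (for `T = S S*`) or `D` (for `T = S* S`) of the theorem. -/
@[reducible]
def fixedSigmaAlgebra (hT : IsMarkovOp μ T) : MeasurableSpace X where
  MeasurableSet' s :=
    ∃ hs : MeasurableSet[mα] s, IsFixedPt T (indicatorConstLp 2 hs (measure_ne_top μ s) 1)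
  measurableSet_empty := ⟨.empty, by simp [IsFixedPt]⟩
  measurableSet_compl _ := fun ⟨hs, hfix⟩ ↦ ⟨hs.compl, hT.isFixedPt_indicatorConstLp_compl hs hfix⟩
  measurableSet_iUnion _ hs :=
    ⟨.iUnion fun n ↦ (hs n).1, hT.isFixedPt_indicatorConstLp_iUnion _ fun n ↦ (hs n).2⟩

theorem fixedSigmaAlgebra_le (hT : IsMarkovOp μ T) : hT.fixedSigmaAlgebra ≤ mα :=
  fun _ hs ↦ hs.1

theorem relComplete_fixedSigmaAlgebra (hT : IsMarkovOp μ T) :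
    RelComplete μ hT.fixedSigmaAlgebra := by
  rintro s s₀ hs ⟨hs₀, hfix⟩ hμ
  refine ⟨hs, ?_⟩
  rwa [(indicatorConstLp_inj hs _ hs₀ _ one_ne_zero).mpr (measure_symmDiff_eq_zero_iff.mp hμ)]

theorem isFixedPt_of_mem_lpMeas (hT : IsMarkovOp μ T) {f : Lp ℝ 2 μ}
    (hf : f ∈ lpMeas ℝ ℝ hT.fixedSigmaAlgebra 2 μ) : IsFixedPt T f := by
  refine Lp.induction_stronglyMeasurable hT.fixedSigmaAlgebra_le ENNReal.ofNat_ne_top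
    (fun f ↦ IsFixedPt T f) ?_ ?_ ?_ f (mem_lpMeas_iff_aestronglyMeasurable.mp hf)
  · rintro c s ⟨hs, hfix⟩ hμs
    rw [Lp.simpleFunc.coe_indicatorConst, indicatorConstLp_eq_smul_one, IsFixedPt, map_smul,
      hfix.eq]
  · intro f g _ _ _ _ _ hf hg
    rw [IsFixedPt, map_add, hf.eq, hg.eq]
  · exact (isClosed_fixedPoints T.continuous).preimage continuous_subtype_val

/-- The truncations `((n (f - c)) ⊓ 1) ⊔ 0` of a fixed point are fixed and converge to the
indicator of `{f > c}`. -/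
theorem isFixedPt_indicatorConstLp_preimage_Ioi (hT : IsMarkovOp μ T) {f : Lp ℝ 2 μ}
    (hf : IsFixedPt T f) {g : X → ℝ} (hg : Measurable g) (hfg : f =ᵐ[μ] g) (c : ℝ) :
    IsFixedPt T
      (indicatorConstLp 2 (hg measurableSet_Ioi) (measure_ne_top μ (g ⁻¹' .Ioi c)) 1) := by
  set ψ : ℕ → Lp ℝ 2 μ := fun n ↦ ((n : ℝ) • (f - c • lpOne μ)) ⊓ lpOne μ ⊔ 0
  have hψ_fix (n : ℕ) : IsFixedPt T (ψ n) := by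
    have hlin : IsFixedPt T ((n : ℝ) • (f - c • lpOne μ)) := by
      simp [IsFixedPt, hf.eq, hT.map_lpOne]
    exact hT.isFixedPt_sup (hT.isFixedPt_inf hlin hT.map_lpOne) (map_zero T)
  have hψ_ae (n : ℕ) : ψ n =ᵐ[μ] fun x ↦ max (min (n * (g x - c)) 1) 0 := by
    filter_upwards [Lp.coeFn_sup (((n : ℝ) • (f - c • lpOne μ)) ⊓ lpOne μ) 0,
      Lp.coeFn_inf ((n : ℝ) • (f - c • lpOne μ)) (lpOne μ),
      Lp.coeFn_smul (n : ℝ) (f - c • lpOne μ), Lp.coeFn_sub f (c • lpOne μ),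
      Lp.coeFn_smul c (lpOne μ), coeFn_lpOne,
      Lp.coeFn_zero ℝ 2 μ, hfg] with x h₁ h₂ h₃ h₄ h₅ h₆ h₇ h₈
    rw [h₁, Pi.sup_apply, h₂, Pi.inf_apply, h₃, Pi.smul_apply, h₄, Pi.sub_apply, h₅,
      Pi.smul_apply, h₆, h₇, h₈]
    simp
  refine (isClosed_fixedPoints T.continuous).mem_of_tendsto
    (Lp.tendsto_of_tendsto_ae_of_norm_le ENNReal.ofNat_ne_top (C := 1) (fun n ↦ ?_) ?_)
    (.of_forall hψ_fix)
  · filter_upwards [hψ_ae n] with x hx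
    rw [hx, Real.norm_eq_abs, abs_of_nonneg (le_max_right _ _)]
    exact max_le (min_le_right _ _) zero_le_one
  · filter_upwards [ae_all_iff.mpr hψ_ae, indicatorConstLp_coeFn (p := 2)
      (hs := hg measurableSet_Ioi) (hμs := measure_ne_top μ (g ⁻¹' .Ioi c)) (c := (1 : ℝ))]
      with x hψx hx
    simp only [hψx, hx]
    convert tendsto_max_min_natCast_mul (g x - c) using 2
    by_cases hc : c < g x <;> simp [hc]

theorem mem_lpMeas_of_isFixedPt (hT : IsMarkovOp μ T) {f : Lp ℝ 2 μ} (hf : IsFixedPt T f) :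
    f ∈ lpMeas ℝ ℝ hT.fixedSigmaAlgebra 2 μ := by
  obtain ⟨g, hg, hfg⟩ := Lp.aestronglyMeasurable f
  have hg_meas : Measurable[hT.fixedSigmaAlgebra] g := measurable_of_Ioi fun c ↦
    ⟨_, hT.isFixedPt_indicatorConstLp_preimage_Ioi hf hg.measurable hfg c⟩
  exact mem_lpMeas_iff_aestronglyMeasurable.mpr ⟨g, hg_meas.stronglyMeasurable, hfg⟩

theorem mem_lpMeas_fixedSigmaAlgebra_iff (hT : IsMarkovOp μ T) {f : Lp ℝ 2 μ} :
    f ∈ lpMeas ℝ ℝ hT.fixedSigmaAlgebra 2 μ ↔ IsFixedPt T f :=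
  ⟨hT.isFixedPt_of_mem_lpMeas, hT.mem_lpMeas_of_isFixedPt⟩

end IsMarkovOp

theorem condExpCLM_apply {X : Type*} {m : MeasurableSpace X} [mα : MeasurableSpace X]
    {μ : Measure X} [hm : Fact (m ≤ mα)] (f : Lp ℝ 2 μ) :
    condExpCLM μ hm.out f = (lpMeas ℝ ℝ m 2 μ).starProjection f :=
  rfl

theorem stmt6_general {X : Type*} [mα : MeasurableSpace X]
    (μ : Measure X) [IsProbabilityMeasure μ]
    (S : Lp ℝ 2 μ →L[ℝ] Lp ℝ 2 μ) (hS : IsMarkovOp μ S) :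
    ∃ (mC mD : MeasurableSpace X) (hmC : mC ≤ mα) (hmD : mD ≤ mα),
      Stmt6Conclusion (mα := mα) μ S hmC hmD := by
  have hC := hS.comp hS.adjoint
  have hD := hS.adjoint.comp hS
  have memC (f : Lp ℝ 2 μ) : f ∈ lpMeas ℝ ℝ hC.fixedSigmaAlgebra 2 μ ↔ S (adjoint S f) = f :=
    hC.mem_lpMeas_fixedSigmaAlgebra_iff
  have memD (f : Lp ℝ 2 μ) : f ∈ lpMeas ℝ ℝ hD.fixedSigmaAlgebra 2 μ ↔ adjoint S (S f) = f :=
    hD.mem_lpMeas_fixedSigmaAlgebra_iff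
  have hSD : Set.MapsTo S (lpMeas ℝ ℝ hD.fixedSigmaAlgebra 2 μ)
      (lpMeas ℝ ℝ hC.fixedSigmaAlgebra 2 μ) := fun f hf ↦ (memC _).mpr (by rw [(memD f).mp hf])
  have hSC : Set.MapsTo (adjoint S) (lpMeas ℝ ℝ hC.fixedSigmaAlgebra 2 μ)
      (lpMeas ℝ ℝ hD.fixedSigmaAlgebra 2 μ) := fun g hg ↦ (memD _).mpr (by rw [(memC g).mp hg])
  have : Fact (hC.fixedSigmaAlgebra ≤ mα) := ⟨hC.fixedSigmaAlgebra_le⟩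
  have : Fact (hD.fixedSigmaAlgebra ≤ mα) := ⟨hD.fixedSigmaAlgebra_le⟩
  refine ⟨_, _, hC.fixedSigmaAlgebra_le, hD.fixedSigmaAlgebra_le, hC.relComplete_fixedSigmaAlgebra,
    hD.relComplete_fixedSigmaAlgebra, memC, memD, fun f ↦ ?_,
    fun f hf ↦ ⟨hSD hf, norm_map_eq_of_adjoint_map_eq ((memD f).mp hf)⟩, hSC,
    fun f hf ↦ (memD f).mp hf, fun g hg ↦ (memC g).mp hg⟩
  rw [condExpCLM_apply, condExpCLM_apply]
  exact Submodule.starProjection_map_eq_of_mapsTo hSD hSC f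

/-- For a Markov operator `S` on `L²(X, μ)` there are `μ`-relatively complete
sub-σ-algebras `C`, `D` such that `L²(C)` is the fixed space of `S ∘ S*`, `L²(D)` is the fixed
space of `S* ∘ S`, `E_C ∘ S = S ∘ E_D`, and `S` maps `L²(D)` isometrically onto `L²(C)` with
inverse (the restriction of) `S*`. -/
theorem stmt6 {X : Type*} [mα : MeasurableSpace X] [StandardBorelSpace X]
    (μ : Measure X) [IsProbabilityMeasure μ]
    (S : Lp ℝ 2 μ →L[ℝ] Lp ℝ 2 μ) (hS : IsMarkovOp μ S) :
    ∃ (mC mD : MeasurableSpace X) (hmC : mC ≤ mα) (hmD : mD ≤ mα),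
      Stmt6Conclusion (mα := mα) μ S hmC hmD :=
  stmt6_general (mα := mα) μ S hS
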